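/- arXiv:2010.09560 — 7 statements merged into one kernel-verified Lean document; each statement's English description precedes it below -/
import Mathlib

section
/- Let α be a positive real number such that G_α = ⟨A, B_α⟩ is a free group of rank 2 with free basis {A, B_α}. Then the stabilizer of ∞ in G_α under the Möbius action is exactly {A^k : k ∈ ℤ}, and the stabilizer of 0 is exactly {B_α^k : k ∈ ℤ}. -/
open Matrix OnePoint

noncomputable abbrev SL2 := Matrix.SpecialLinearGroup (Fin 2) ℝ

noncomputable def mobius (g : SL2) : OnePoint ℝ → OnePoint ℝ :=
  fun p => Option.elim p
    (if g.1 1 0 = 0 then ∞ else ((g.1 0 0 / g.1 1 0 : ℝ) : OnePoint ℝ))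
    (fun x => if g.1 1 0 * x + g.1 1 1 = 0 then ∞
      else (((g.1 0 0 * x + g.1 0 1) / (g.1 1 0 * x + g.1 1 1) : ℝ) : OnePoint ℝ))

noncomputable def matA : SL2 := ⟨!![1,1;0,1], by norm_num [Matrix.det_fin_two_of]⟩
noncomputable def matB (α : ℝ) : SL2 := ⟨!![1,0;α,1], by norm_num [Matrix.det_fin_two_of]⟩

/-!
A matrix of `SL(2, ℝ)` fixes `∞` exactly when it is upper triangular, and an upper triangular
`g` conjugates `A` into a matrix commuting with `A`. Writing `g` as the image of a word `x` of
the free group, injectivity turns this into `x a x⁻¹` commuting with the basis element `a`. By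
Nielsen–Schreier, commuting elements of a free group lie in a free abelian, hence cyclic,
subgroup; since `a` has exponent sum one in itself it is not a proper power, so `x a x⁻¹ = a ^ k`,
the exponent sum forces `k = 1`, and then `x` itself commutes with `a` and is a power of `a`.
The point `0` is handled in the same way with lower triangular matrices and `B_α`.
-/

open Subgroup

theorem IsFreeGroup.isCyclic_of_isMulCommutative (G : Type*) [Group G] [IsFreeGroup G]
    [IsMulCommutative G] : IsCyclic G := by
  have hgen : Subsingleton (IsFreeGroup.Generators G) := by
    refine ⟨fun t₁ t₂ => by_contra fun hne => ?_⟩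
    classical
    let ψ : G →* FreeGroup Bool := IsFreeGroup.lift fun t => FreeGroup.of (decide (t = t₁))
    have hcomm := congrArg ψ (mul_comm' (IsFreeGroup.of t₁) (IsFreeGroup.of t₂))
    simp [ψ, Ne.symm hne] at hcomm
    exact absurd hcomm (by decide)
  obtain ⟨g, hg⟩ :
      ∃ g : FreeGroup (IsFreeGroup.Generators G), Set.range FreeGroup.of ⊆ {g} := by
    rcases isEmpty_or_nonempty (IsFreeGroup.Generators G) with _ | ⟨⟨t⟩⟩
    · exact ⟨1, by simp [Set.range_eq_empty]⟩
    · exact ⟨FreeGroup.of t, by rintro _ ⟨s, rfl⟩; rw [Subsingleton.elim s t]; rfl⟩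
  have : IsCyclic (FreeGroup (IsFreeGroup.Generators G)) := by
    rw [isCyclic_iff_exists_zpowers_eq_top]
    refine ⟨g, eq_top_iff.mpr ?_⟩
    rw [← FreeGroup.closure_range_of, zpowers_eq_closure]
    exact closure_mono hg
  exact isCyclic_of_surjective (IsFreeGroup.toFreeGroup G).symm.toMonoidHom
    (IsFreeGroup.toFreeGroup G).symm.surjective

namespace FreeGroup

variable {T : Type*}

open Classical in
noncomputable def exponentSum (c : T) : FreeGroup T →* Multiplicative ℤ :=
  FreeGroup.lift (Pi.mulSingle c (Multiplicative.ofAdd 1))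

@[simp]
theorem exponentSum_of_self (c : T) : exponentSum c (of c) = Multiplicative.ofAdd 1 := by
  simp [exponentSum]

theorem eq_or_eq_inv_of_of_eq_zpow {c : T} {h : FreeGroup T} {m : ℤ} (hm : of c = h ^ m) :
    h = of c ∨ h = (of c)⁻¹ := by
  have hunit : m * (exponentSum c h).toAdd = 1 := by
    simpa [toAdd_zpow] using congrArg (fun y => (exponentSum c y).toAdd) hm.symm
  rcases Int.isUnit_iff.mp (IsUnit.of_mul_eq_one _ hunit) with rfl | rfl
  · simp [hm]
  · simp [hm]

theorem mem_zpowers_of_commute_of {x : FreeGroup T} {c : T} (hx : Commute x (of c)) :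
    x ∈ zpowers (of c) := by
  let H := closure ({x, of c} : Set (FreeGroup T))
  have : IsMulCommutative H := isMulCommutative_closure (by
    rintro _ (rfl | rfl) _ (rfl | rfl) <;> first | rfl | exact hx | exact hx.symm)
  have : IsCyclic H := IsFreeGroup.isCyclic_of_isMulCommutative H
  obtain ⟨⟨h, _⟩, hh⟩ := IsCyclic.exists_generator (α := H)
  have hmem : ∀ y ∈ ({x, of c} : Set (FreeGroup T)), y ∈ zpowers h := fun y hy => by
    obtain ⟨k, hk⟩ := mem_zpowers_iff.mp (hh ⟨y, subset_closure hy⟩)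
    exact mem_zpowers_iff.mpr ⟨k, congrArg Subtype.val hk⟩
  obtain ⟨m, hm⟩ := mem_zpowers_iff.mp (hmem (of c) (by simp))
  have hzp : zpowers h = zpowers (of c) := by
    rcases eq_or_eq_inv_of_of_eq_zpow hm.symm with rfl | rfl
    · rfl
    · exact zpowers_inv
  exact hzp ▸ hmem x (by simp)

theorem mem_zpowers_of_commute_conj_of {x : FreeGroup T} {c : T}
    (hx : Commute (x * of c * x⁻¹) (of c)) : x ∈ zpowers (of c) := by
  obtain ⟨k, hk⟩ := mem_zpowers_iff.mp (mem_zpowers_of_commute_of hx)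
  obtain rfl : k = 1 := by
    simpa [toAdd_zpow] using congrArg (fun y => (exponentSum c y).toAdd) hk
  rw [zpow_one, eq_mul_inv_iff_mul_eq] at hk
  exact mem_zpowers_of_commute_of hk.symm

theorem mem_zpowers_of_commute_conj_of_injective {G : Type*} [Group G]
    {f : FreeGroup T →* G} (hf : Function.Injective f) {c : T} {x : FreeGroup T}
    (hx : Commute (f x * f (of c) * (f x)⁻¹) (f (of c))) : f x ∈ zpowers (f (of c)) := by
  have hcomm : Commute (x * of c * x⁻¹) (of c) :=
    hf (by simpa [Commute, SemiconjBy] using hx)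
  rw [← MonoidHom.map_zpowers]
  exact mem_map_of_mem f (mem_zpowers_of_commute_conj_of hcomm)

end FreeGroup

theorem coe_matA_zpow (k : ℤ) :
    ((matA ^ k : SL2) : Matrix (Fin 2) (Fin 2) ℝ) = !![1, (k : ℝ); 0, 1] := by
  induction k using Int.induction_on with
  | zero => simp [Matrix.one_fin_two]
  | succ n ih =>
    rw [_root_.zpow_add_one, Matrix.SpecialLinearGroup.coe_mul, ih]
    simp [matA, add_comm]
  | pred n ih =>
    rw [_root_.zpow_sub_one, Matrix.SpecialLinearGroup.coe_mul, ih,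
      Matrix.SpecialLinearGroup.coe_inv]
    simp [matA, Matrix.adjugate_fin_two_of]
    ring

theorem coe_matB_zpow (α : ℝ) (k : ℤ) :
    ((matB α ^ k : SL2) : Matrix (Fin 2) (Fin 2) ℝ) = !![1, 0; k * α, 1] := by
  induction k using Int.induction_on with
  | zero => simp [Matrix.one_fin_two]
  | succ n ih =>
    rw [_root_.zpow_add_one, Matrix.SpecialLinearGroup.coe_mul, ih]
    simp [matB]
    ring
  | pred n ih =>
    rw [_root_.zpow_sub_one, Matrix.SpecialLinearGroup.coe_mul, ih,
      Matrix.SpecialLinearGroup.coe_inv]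
    simp [matB, Matrix.adjugate_fin_two_of]
    ring

theorem SL2.det_eq (g : SL2) : g 0 0 * g 1 1 - g 0 1 * g 1 0 = 1 := by
  rw [← Matrix.det_fin_two, g.det_coe]

theorem mobius_infty (g : SL2) :
    mobius g ∞ = if g 1 0 = 0 then ∞ else ((g 0 0 / g 1 0 : ℝ) : OnePoint ℝ) :=
  rfl

theorem mobius_coe (g : SL2) (x : ℝ) :
    mobius g x = if g 1 0 * x + g 1 1 = 0 then ∞
      else (((g 0 0 * x + g 0 1) / (g 1 0 * x + g 1 1) : ℝ) : OnePoint ℝ) :=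
  rfl

theorem mobius_infty_eq_infty_iff (g : SL2) : mobius g ∞ = ∞ ↔ g 1 0 = 0 := by
  by_cases hc : g 1 0 = 0 <;> simp [mobius_infty, hc]

theorem mobius_zero_eq_zero_iff (g : SL2) : mobius g (0 : ℝ) = (0 : ℝ) ↔ g 0 1 = 0 := by
  by_cases hd : g 1 1 = 0
  · have hb : g 0 1 ≠ 0 := fun hb => by simpa [hd, hb] using g.det_eq
    simp [mobius_coe, hd, hb]
  · simp [mobius_coe, hd]

theorem commute_conj_matA_of_lower_left_eq_zero (g : SL2) (hc : g 1 0 = 0) :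
    Commute (g * matA * g⁻¹) matA := by
  ext i j
  simp only [Matrix.SpecialLinearGroup.coe_mul, Matrix.SpecialLinearGroup.coe_inv]
  rw [Matrix.eta_fin_two g.1]
  fin_cases i <;> fin_cases j <;> simp [Matrix.adjugate_fin_two_of, hc, matA]
  ring

theorem commute_conj_matB_of_upper_right_eq_zero (α : ℝ) (g : SL2) (hb : g 0 1 = 0) :
    Commute (g * matB α * g⁻¹) (matB α) := by
  ext i j
  simp only [Matrix.SpecialLinearGroup.coe_mul, Matrix.SpecialLinearGroup.coe_inv]
  rw [Matrix.eta_fin_two g.1]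
  fin_cases i <;> fin_cases j <;> simp [Matrix.adjugate_fin_two_of, hb, matB]
  ring

theorem stmt3_general (α : ℝ)
    (hfree : Function.Injective
      (FreeGroup.lift (fun b : Bool => if b then matA else matB α))) :
    (∀ g ∈ Subgroup.closure ({matA, matB α} : Set SL2),
      (mobius g ∞ = ∞ ↔ ∃ k : ℤ, g = matA ^ k)) ∧
    (∀ g ∈ Subgroup.closure ({matA, matB α} : Set SL2),
      (mobius g ((0:ℝ) : OnePoint ℝ) = ((0:ℝ) : OnePoint ℝ) ↔ ∃ k : ℤ, g = matB α ^ k)) := by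
  set φ := FreeGroup.lift (fun b : Bool => if b then matA else matB α)
  have hA : φ (FreeGroup.of true) = matA := by simp [φ]
  have hB : φ (FreeGroup.of false) = matB α := by simp [φ]
  have hrange : Subgroup.closure ({matA, matB α} : Set SL2) = φ.range := by
    rw [FreeGroup.range_lift_eq_closure, Bool.range_eq, Set.pair_comm]; rfl
  have mem_zpowers_iff' {h g : SL2} : g ∈ Subgroup.zpowers h ↔ ∃ k : ℤ, g = h ^ k := by
    simp only [Subgroup.mem_zpowers_iff, eq_comm]
  refine ⟨fun g hg => ?_, fun g hg => ?_⟩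
  all_goals obtain ⟨x, rfl⟩ := hrange ▸ hg
  · rw [mobius_infty_eq_infty_iff, ← mem_zpowers_iff', ← hA]
    refine ⟨fun hc => FreeGroup.mem_zpowers_of_commute_conj_of_injective hfree ?_, ?_⟩
    · rw [hA]; exact commute_conj_matA_of_lower_left_eq_zero _ hc
    · rintro ⟨k, hk⟩; rw [← hk, hA, coe_matA_zpow]; rfl
  · rw [mobius_zero_eq_zero_iff, ← mem_zpowers_iff', ← hB]
    refine ⟨fun hb => FreeGroup.mem_zpowers_of_commute_conj_of_injective hfree ?_, ?_⟩
    · rw [hB]; exact commute_conj_matB_of_upper_right_eq_zero α _ hb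
    · rintro ⟨k, hk⟩; rw [← hk, hB, coe_matB_zpow]; rfl

theorem stmt3 (α : ℝ) (hα : 0 < α)
    (hfree : Function.Injective
      (FreeGroup.lift (fun b : Bool => if b then matA else matB α))) :
    (∀ g ∈ Subgroup.closure ({matA, matB α} : Set SL2),
      (mobius g ∞ = ∞ ↔ ∃ k : ℤ, g = matA ^ k)) ∧
    (∀ g ∈ Subgroup.closure ({matA, matB α} : Set SL2),
      (mobius g ((0:ℝ) : OnePoint ℝ) = ((0:ℝ) : OnePoint ℝ) ↔ ∃ k : ℤ, g = matB α ^ k)) :=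
  stmt3_general α hfree
end

section
/- Let α be a real number and suppose there exists X ∈ G_α = ⟨A, B_α⟩ with X(0) = 1/2 under the Möbius action. Then Y := A·h(X) (where h is the automorphism [[a,b],[c,d]] ↦ [[a,-b],[-c,d]]) satisfies Y(0) = 1/2, and Y ≠ X whenever X and Y are compared as words via the abelianization counting A-exponents. -/
open Matrix OnePoint

noncomputable def hmap (g : SL2) : SL2 :=
  ⟨!![g.1 0 0, -(g.1 0 1); -(g.1 1 0), g.1 1 1], by
    have h := g.2
    rw [Matrix.det_fin_two] at h
    rw [Matrix.det_fin_two_of]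
    ring_nf
    ring_nf at h
    linarith⟩

/-!
Conjugation by `diag(1, -1)` is the reflection `z ↦ -z`, so `h(X)(0) = -X(0)`, and `A` is the
translation by `1`, whence `Y(0) = 1 - X(0) = 1/2`. Since `h` inverts both `A` and `B_α`, `Y` is the
image of the word `A · w̄`, where `w̄` is `w` with every generator inverted. If `w` has `A`-exponent
sum `n`, then `A · w̄` has `1 - n`, so the two words differ.
-/

namespace FreeGroup

variable {β G : Type*} [Group G]

theorem lift_lift_inv_of (f : β → G) (φ : G →* G) (hφ : ∀ b, φ (f b) = (f b)⁻¹)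
    (w : FreeGroup β) : lift f (lift (fun b => (of b)⁻¹) w) = φ (lift f w) := by
  change (lift f).comp (lift fun b => (of b)⁻¹) w = φ.comp (lift f) w
  congr 1
  ext b
  simp [hφ]

def expSum [DecidableEq β] (b : β) : FreeGroup β →* Multiplicative ℤ :=
  lift fun c => if c = b then Multiplicative.ofAdd 1 else 1

theorem expSum_lift_inv_of [DecidableEq β] (b : β) (w : FreeGroup β) :
    expSum b (lift (fun c => (of c)⁻¹) w) = (expSum b w)⁻¹ :=
  lift_lift_inv_of (G := Multiplicative ℤ) _ invMonoidHom (fun _ => rfl) w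

/-- If `w` has exponent sum `n` in `b`, the left side has exponent sum `1 - n`; these differ by
parity. -/
theorem of_mul_lift_inv_of_ne (b : β) (w : FreeGroup β) :
    of b * lift (fun c => (of c)⁻¹) w ≠ w := by
  classical
  intro h
  have hsum := congrArg (fun v => Multiplicative.toAdd (expSum b v)) h
  simp only [_root_.map_mul, expSum_lift_inv_of, toAdd_mul, toAdd_inv] at hsum
  simp only [expSum, lift_apply_of, if_true, toAdd_ofAdd] at hsum
  omega

end FreeGroup

theorem hmap_mul (g g' : SL2) : hmap (g * g') = hmap g * hmap g' := by
  refine Subtype.ext ?_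
  change _ = (hmap g).1 * (hmap g').1
  ext i j
  fin_cases i <;> fin_cases j <;>
    simp [hmap, Matrix.mul_apply, Fin.sum_univ_two] <;> ring

theorem hmap_matA : hmap matA = matA⁻¹ := by
  refine Subtype.ext ?_
  change _ = adjugate matA.1
  ext i j
  fin_cases i <;> fin_cases j <;> simp [hmap, matA, adjugate_fin_two]

theorem hmap_matB (α : ℝ) : hmap (matB α) = (matB α)⁻¹ := by
  refine Subtype.ext ?_
  change _ = adjugate (matB α).1
  ext i j
  fin_cases i <;> fin_cases j <;> simp [hmap, matB, adjugate_fin_two]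

theorem mobius_zero (g : SL2) :
    mobius g (0 : ℝ) = if g.1 1 1 = 0 then ∞ else ((g.1 0 1 / g.1 1 1 : ℝ) : OnePoint ℝ) := by
  simp [mobius, OnePoint.some]

theorem mobius_zero_eq_coe_iff (g : SL2) (x : ℝ) :
    mobius g (0 : ℝ) = (x : OnePoint ℝ) ↔ g.1 1 1 ≠ 0 ∧ g.1 0 1 / g.1 1 1 = x := by
  rw [mobius_zero]
  split_ifs with h <;> simp [h]

theorem mobius_matA_mul_hmap_zero {g : SL2} {x : ℝ} (hg : mobius g (0 : ℝ) = (x : OnePoint ℝ)) :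
    mobius (matA * hmap g) (0 : ℝ) = ((1 - x : ℝ) : OnePoint ℝ) := by
  obtain ⟨hd, rfl⟩ := (mobius_zero_eq_coe_iff g x).1 hg
  have hY : (matA * hmap g).1 = !![g.1 0 0 - g.1 1 0, g.1 1 1 - g.1 0 1; -g.1 1 0, g.1 1 1] := by
    change matA.1 * (hmap g).1 = _
    ext i j
    fin_cases i <;> fin_cases j <;> simp [matA, hmap, Matrix.mul_apply, Fin.sum_univ_two] <;> ring
  rw [mobius_zero_eq_coe_iff, hY]
  simp only [of_apply, cons_val', cons_val_zero, cons_val_one, empty_val', cons_val_fin_one]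
  refine ⟨hd, ?_⟩
  field_simp

theorem stmt7 (α : ℝ) (w : FreeGroup Bool)
    (q : FreeGroup Bool →* SL2)
    (hq : q = FreeGroup.lift (fun b : Bool => if b then matA else matB α))
    (ht : FreeGroup Bool →* FreeGroup Bool)
    (hht : ht = FreeGroup.lift (fun b : Bool => (FreeGroup.of b)⁻¹))
    (hX : mobius (q w) ((0:ℝ) : OnePoint ℝ) = (((1:ℝ)/2 : ℝ) : OnePoint ℝ)) :
    mobius (q (FreeGroup.of true * ht w)) ((0:ℝ) : OnePoint ℝ)
        = (((1:ℝ)/2 : ℝ) : OnePoint ℝ) ∧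
    FreeGroup.of true * ht w ≠ w := by
  have hY : q (FreeGroup.of true * ht w) = matA * hmap (q w) := by
    rw [hq, hht, map_mul, FreeGroup.lift_lift_inv_of _ (MonoidHom.mk' hmap hmap_mul)]
    · simp
    · rintro (_ | _) <;> simp [hmap_matA, hmap_matB]
  refine ⟨?_, hht ▸ FreeGroup.of_mul_lift_inv_of_ne true w⟩
  rw [hY, mobius_matA_mul_hmap_zero hX]
  norm_num
end

section
/- With u_n, l_n defined by (u₁,l₁) = (-1, 1-α), u_{n+1} = u_n - l_n, l_{n+1} = α u_n + (1-α) l_n, the polynomials u_n and l_n have no common complex root: for every n ≥ 1 and every α₀ ∈ ℂ, it is not the case that u_n(α₀) = 0 and l_n(α₀) = 0. -/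
/-!
The pair `(u_n, l_n)` is the second column of `M ^ n` for `M = !![1, -1; X, 1 - X]`, and
`det M = 1`. Expanding `det (M ^ n) = 1` gives a Bézout identity between `u_n` and `l_n` over
`ℤ[X]`, which survives evaluation at any `α₀ ∈ ℂ`, so `u_n(α₀)` and `l_n(α₀)` cannot both vanish.
-/

open Polynomial

noncomputable def ul : ℕ → Polynomial ℤ × Polynomial ℤ
  | 0 => (0, 1)
  | n + 1 => ((ul n).1 - (ul n).2, X * (ul n).1 + (1 - X) * (ul n).2)

noncomputable def upoly (n : ℕ) : Polynomial ℤ := (ul n).1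
noncomputable def lpoly (n : ℕ) : Polynomial ℤ := (ul n).2

theorem Matrix.isCoprime_col_of_det_eq_one {R : Type*} [CommRing R]
    {A : Matrix (Fin 2) (Fin 2) R} (hA : A.det = 1) (j : Fin 2) : IsCoprime (A 0 j) (A 1 j) := by
  rw [Matrix.det_fin_two] at hA
  match j with
  | 0 => exact ⟨A 1 1, -A 0 1, by linear_combination hA⟩
  | 1 => exact ⟨-A 1 0, A 0 0, by linear_combination hA⟩

noncomputable def transferMatrix : Matrix (Fin 2) (Fin 2) ℤ[X] := !![1, -1; X, 1 - X]

theorem det_transferMatrix : transferMatrix.det = 1 := by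
  simp only [transferMatrix, Matrix.det_fin_two_of]
  ring

theorem ul_eq_col_transferMatrix_pow (n : ℕ) :
    ul n = ((transferMatrix ^ n) 0 1, (transferMatrix ^ n) 1 1) := by
  induction n with
  | zero => simp [ul]
  | succ n ih =>
    rw [ul, ih, pow_succ']
    simp only [transferMatrix, Matrix.mul_apply, Matrix.of_apply, Matrix.cons_val',
      Matrix.cons_val_fin_one, Matrix.cons_val_zero, Matrix.cons_val_one, Fin.sum_univ_two,
      one_mul, neg_mul, Prod.mk.injEq, and_true]
    ring

theorem isCoprime_upoly_lpoly (n : ℕ) : IsCoprime (upoly n) (lpoly n) := by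
  have hdet : (transferMatrix ^ n).det = 1 := by rw [Matrix.det_pow, det_transferMatrix, one_pow]
  rw [upoly, lpoly, ul_eq_col_transferMatrix_pow n]
  exact Matrix.isCoprime_col_of_det_eq_one hdet 1

theorem stmt10_general (n : ℕ) (α₀ : ℂ) :
    ¬ (Polynomial.aeval α₀ (upoly n) = 0 ∧ Polynomial.aeval α₀ (lpoly n) = 0) := by
  rintro ⟨hu, hl⟩
  have hcop := (isCoprime_upoly_lpoly n).map (Polynomial.aeval α₀).toRingHom
  rw [AlgHom.toRingHom_eq_coe, RingHom.coe_coe, hu, hl] at hcop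
  exact not_isCoprime_zero_zero hcop

theorem stmt10 (n : ℕ) (hn : 1 ≤ n) (α₀ : ℂ) :
    ¬ (Polynomial.aeval α₀ (upoly n) = 0 ∧ Polynomial.aeval α₀ (lpoly n) = 0) :=
  stmt10_general n α₀
end

section
/- Define p_n(α) = (-1)^{n+1}(2·u_n(α) - l_n(α)), where u_n, l_n are the second-column entries of (B_α A^{-1})^n. Then p_n is a monic polynomial of degree n with integer coefficients, and for any real α₀ with l_n(α₀) ≠ 0, p_n(α₀) = 0 if and only if (B_{α₀} A^{-1})^n(0) = 1/2 under the Möbius action. -/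
/-!
By induction on the recursion, `l_n` has degree `n` and leading coefficient `(-1)^n`, while
`deg u_n < n`; so `2 u_n - l_n` has leading coefficient `-(-1)^n` and the sign `(-1)^(n+1)`
makes `p_n` monic of degree `n`. The second column of `(B_α A⁻¹)^n` is `(u_n(α), l_n(α))`, so
when `l_n(α) ≠ 0` the matrix sends `0` to `u_n(α) / l_n(α)`, which equals `1/2` exactly when
`2 u_n(α) - l_n(α) = 0`.
-/

open Matrix OnePoint Polynomial

noncomputable def ppoly (n : ℕ) : Polynomial ℤ :=
  (-1) ^ (n + 1) * (2 * upoly n - lpoly n)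

lemma upoly_succ (n : ℕ) : upoly (n + 1) = upoly n - lpoly n := rfl

lemma lpoly_succ (n : ℕ) : lpoly (n + 1) = X * upoly n + (1 - X) * lpoly n := rfl

lemma degree_upoly_lt_and_degree_lpoly (n : ℕ) :
    (upoly n).degree < n ∧ (lpoly n).degree = n ∧ (lpoly n).leadingCoeff = (-1) ^ n := by
  induction n with
  | zero => simp [upoly, lpoly, ul]
  | succ n ih =>
    obtain ⟨hu, hl, hlc⟩ := ih
    have hdeg_one_sub_X : (1 - X : ℤ[X]).degree = 1 := by
      rw [← neg_sub, degree_neg, ← C_1, degree_X_sub_C]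
    have hlc_one_sub_X : (1 - X : ℤ[X]).leadingCoeff = -1 := by
      rw [← neg_sub, leadingCoeff_neg, ← C_1, leadingCoeff_X_sub_C]
    have hdeg_main : ((1 - X) * lpoly n).degree = ↑(n + 1) := by
      rw [degree_mul, hdeg_one_sub_X, hl]; push_cast; ring
    have hdeg_lower : (X * upoly n).degree < ↑(n + 1) := by
      rw [degree_mul, degree_X, add_comm]; push_cast
      exact WithBot.add_lt_add_right (by simp) hu
    refine ⟨?_, ?_, ?_⟩
    · rw [upoly_succ]
      refine (degree_sub_le _ _).trans_lt (max_lt (hu.trans ?_) (hl.trans_lt ?_)) <;>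
        exact_mod_cast Nat.lt_succ_self n
    · rw [lpoly_succ, degree_add_eq_right_of_degree_lt (hdeg_main ▸ hdeg_lower), hdeg_main]
    · rw [lpoly_succ, leadingCoeff_add_of_degree_lt (hdeg_main ▸ hdeg_lower), leadingCoeff_mul,
        hlc_one_sub_X, hlc, pow_succ]
      ring

lemma degree_ppoly_and_leadingCoeff (n : ℕ) :
    (ppoly n).degree = n ∧ (ppoly n).leadingCoeff = 1 := by
  obtain ⟨hu, hl, hlc⟩ := degree_upoly_lt_and_degree_lpoly n
  have h2u : (2 * upoly n).degree < (lpoly n).degree := by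
    have h2 : (2 : ℤ[X]).degree = 0 := by compute_degree!
    rw [hl]; exact (degree_mul_le _ _).trans_lt (by rwa [h2, zero_add])
  have hsign : ((-1 : ℤ[X]) ^ (n + 1)).degree = 0 := by simp
  refine ⟨?_, ?_⟩
  · rw [ppoly, degree_mul, hsign, zero_add, degree_sub_eq_right_of_degree_lt h2u, hl]
  · rw [ppoly, leadingCoeff_mul, leadingCoeff_sub_of_degree_lt' h2u, hlc]
    simp [pow_succ, ← mul_pow]

lemma coe_matB_mul_matA_inv (α : ℝ) :
    ((matB α * matA⁻¹ : SL2) : Matrix (Fin 2) (Fin 2) ℝ) = !![1, -1; α, 1 - α] := by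
  rw [Matrix.SpecialLinearGroup.coe_mul, Matrix.SpecialLinearGroup.coe_inv]
  simp [matA, matB, Matrix.adjugate_fin_two_of, sub_eq_neg_add]

lemma matB_mul_matA_inv_pow_col (α : ℝ) (n : ℕ) :
    ((matB α * matA⁻¹) ^ n : SL2).1 0 1 = aeval α (upoly n) ∧
    ((matB α * matA⁻¹) ^ n : SL2).1 1 1 = aeval α (lpoly n) := by
  rw [Matrix.SpecialLinearGroup.coe_pow, coe_matB_mul_matA_inv]
  induction n with
  | zero => simp [upoly, lpoly, ul]
  | succ n ih =>
    rw [pow_succ', upoly_succ, lpoly_succ]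
    simp only [Matrix.mul_apply, Fin.sum_univ_two, ih.1, ih.2]
    exact ⟨by simp [sub_eq_add_neg], by simp⟩

lemma mobius_zero_of_ne (g : SL2) (hg : g.1 1 1 ≠ 0) :
    mobius g ((0 : ℝ) : OnePoint ℝ) = ((g.1 0 1 / g.1 1 1 : ℝ) : OnePoint ℝ) := by
  change (if g.1 1 0 * 0 + g.1 1 1 = 0 then ∞ else _) = _
  simp [hg]

theorem stmt11_general (n : ℕ) :
    (ppoly n).Monic ∧ (ppoly n).natDegree = n ∧
    ∀ α₀ : ℝ, Polynomial.aeval α₀ (lpoly n) ≠ 0 →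
      (Polynomial.aeval α₀ (ppoly n) = 0 ↔
        mobius ((matB α₀ * matA⁻¹) ^ n) ((0:ℝ) : OnePoint ℝ)
          = (((1:ℝ)/2 : ℝ) : OnePoint ℝ)) := by
  obtain ⟨hdeg, hlc⟩ := degree_ppoly_and_leadingCoeff n
  refine ⟨hlc, natDegree_eq_of_degree_eq_some hdeg, fun α hl => ?_⟩
  obtain ⟨hu_entry, hl_entry⟩ := matB_mul_matA_inv_pow_col α n
  rw [mobius_zero_of_ne _ (hl_entry ▸ hl), hu_entry, hl_entry, OnePoint.coe_eq_coe,
    div_eq_iff hl, ppoly]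
  simp only [map_mul, map_pow, map_neg, map_one, map_sub, map_ofNat]
  rw [mul_eq_zero, or_iff_right (pow_ne_zero _ (neg_ne_zero.2 one_ne_zero))]
  constructor <;> intro h <;> linarith

theorem stmt11 (n : ℕ) (hn : 1 ≤ n) :
    (ppoly n).Monic ∧ (ppoly n).natDegree = n ∧
    ∀ α₀ : ℝ, Polynomial.aeval α₀ (lpoly n) ≠ 0 →
      (Polynomial.aeval α₀ (ppoly n) = 0 ↔
        mobius ((matB α₀ * matA⁻¹) ^ n) ((0:ℝ) : OnePoint ℝ)
          = (((1:ℝ)/2 : ℝ) : OnePoint ℝ)) :=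
  stmt11_general n
end

section
/- Let I ⊆ ℝ be open, and let f : I → ℝ ∪ {∞} ≅ S¹ be continuous (via the Cayley transform). If f is anticlockwise at every point of I, then the map g defined by g(x) = f(x) + x is also anticlockwise at every point of I. Here f is anticlockwise at x₀ if either f or -1/f is strictly increasing on a neighborhood of x₀ (whichever is finite there). -/
open Matrix OnePoint Polynomial

def IncAt (I : Set ℝ) (f : ℝ → OnePoint ℝ) (a : ℝ) : Prop :=
  ∃ ε > 0, Set.Ioo (a - ε) (a + ε) ⊆ I ∧
    ∀ x ∈ Set.Ioo (a - ε) (a + ε), ∀ y ∈ Set.Ioo (a - ε) (a + ε), x < y →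
      ∃ rx ry : ℝ, f x = (rx : OnePoint ℝ) ∧ f y = (ry : OnePoint ℝ) ∧ rx < ry

def DecAt (I : Set ℝ) (f : ℝ → OnePoint ℝ) (a : ℝ) : Prop :=
  ∃ ε > 0, Set.Ioo (a - ε) (a + ε) ⊆ I ∧
    ∀ x ∈ Set.Ioo (a - ε) (a + ε), ∀ y ∈ Set.Ioo (a - ε) (a + ε), x < y →
      ∃ rx ry : ℝ, f x = (rx : OnePoint ℝ) ∧ f y = (ry : OnePoint ℝ) ∧ ry < rx

noncomputable def negInv (p : OnePoint ℝ) : OnePoint ℝ :=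
  Option.elim p (((0 : ℝ) : OnePoint ℝ))
    (fun x => if x = 0 then ∞ else ((-1 / x : ℝ) : OnePoint ℝ))

def AnticlockwiseAt (I : Set ℝ) (f : ℝ → OnePoint ℝ) (a : ℝ) : Prop :=
  IncAt I f a ∨ IncAt I (fun x => negInv (f x)) a

def ClockwiseAt (I : Set ℝ) (f : ℝ → OnePoint ℝ) (a : ℝ) : Prop :=
  DecAt I f a ∨ DecAt I (fun x => negInv (f x)) a

noncomputable def addPt (p : OnePoint ℝ) (c : ℝ) : OnePoint ℝ :=
  Option.elim p ∞ (fun r => ((r + c : ℝ) : OnePoint ℝ))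

/-! In the chart `negInv` of the circle, translation `p ↦ p + x` reads `q ↦ q / (1 - x q)`.
Where `f` itself is increasing, so is `f + id`. Otherwise `negInv ∘ f = φ` near `a` with `φ`
strictly increasing, and continuous because `negInv` is a homeomorphism. If `φ a ≠ 0`, then `φ`
keeps its sign near `a`, so `f = -1 / φ` is increasing there. If `φ a = 0`, i.e. `f a = ∞`, then
`negInv ∘ (f + id) = φ / (1 - x φ)` near `a`, and this is increasing as long as `1 - x φ > 0`. -/

open Filter Topology Set Bornology

@[simp] lemma negInv_infty : negInv ∞ = ((0 : ℝ) : OnePoint ℝ) := rfl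

@[simp] lemma negInv_coe_zero : negInv ((0 : ℝ) : OnePoint ℝ) = ∞ := if_pos rfl

lemma negInv_coe_of_ne_zero {r : ℝ} (hr : r ≠ 0) :
    negInv (r : OnePoint ℝ) = ((-1 / r : ℝ) : OnePoint ℝ) := if_neg hr

@[simp] lemma negInv_negInv (p : OnePoint ℝ) : negInv (negInv p) = p := by
  induction p using OnePoint.rec with
  | infty => simp
  | coe r =>
    rcases eq_or_ne r 0 with rfl | hr
    · simp
    · rw [negInv_coe_of_ne_zero hr, negInv_coe_of_ne_zero (by simpa using hr)]
      congr 1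
      field_simp

lemma continuous_negInv : Continuous negInv := by
  have hinv : ∀ {l : Filter ℝ}, (∀ᶠ r in l, r ≠ 0) →
      negInv ∘ (↑) =ᶠ[l] fun r : ℝ => ((-1 / r : ℝ) : OnePoint ℝ) :=
    fun hl => hl.mono fun _ hr => negInv_coe_of_ne_zero hr
  have hdiv (r : ℝ) : -r⁻¹ = -1 / r := by ring
  have hcob : coclosedCompact ℝ = cobounded ℝ := by
    rw [coclosedCompact_eq_cocompact, Metric.cobounded_eq_cocompact]
  refine continuous_iff_continuousAt.2 fun p => ?_
  induction p using OnePoint.rec with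
  | infty =>
    rw [continuousAt_infty', hcob]
    refine Tendsto.congr' (hinv (eventually_ne_cobounded 0)).symm ?_
    refine (continuous_coe.tendsto 0).comp ?_
    rw [← neg_zero]
    exact (tendsto_inv₀_cobounded.neg).congr hdiv
  | coe r =>
    rw [continuousAt_coe]
    rcases eq_or_ne r 0 with rfl | hr
    · rw [ContinuousAt, ← nhdsNE_sup_pure, tendsto_sup]
      refine ⟨Tendsto.congr' (hinv self_mem_nhdsWithin).symm ?_, tendsto_pure_nhds _ _⟩
      rw [Function.comp_apply, negInv_coe_zero]
      exact (hcob ▸ tendsto_coe_infty).comp <|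
        (tendsto_neg_cobounded.comp tendsto_inv₀_nhdsNE_zero).congr hdiv
    · refine ContinuousAt.congr ?_ (hinv (eventually_ne_nhds hr)).symm
      exact continuous_coe.continuousAt.comp (by fun_prop (disch := exact hr))

@[simp] lemma addPt_infty (c : ℝ) : addPt ∞ c = ∞ := rfl

@[simp] lemma addPt_coe (r c : ℝ) : addPt (r : OnePoint ℝ) c = ((r + c : ℝ) : OnePoint ℝ) := rfl

lemma negInv_addPt_negInv {r : ℝ} (x : ℝ) (h : 1 - x * r ≠ 0) :
    negInv (addPt (negInv r) x) = ((r / (1 - x * r) : ℝ) : OnePoint ℝ) := by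
  rcases eq_or_ne r 0 with rfl | hr
  · simp
  have e : -1 / r + x = -(1 - x * r) / r := by field_simp; ring
  have hne : -1 / r + x ≠ 0 := by rw [e]; exact div_ne_zero (neg_ne_zero.2 h) hr
  rw [negInv_coe_of_ne_zero hr, addPt_coe, negInv_coe_of_ne_zero hne, e, div_div_eq_mul_div,
    neg_one_mul, neg_div_neg_eq]

lemma continuousAt_of_eventually_negInv_eq {f : ℝ → OnePoint ℝ} {φ : ℝ → ℝ} {a : ℝ}
    (hf : ContinuousAt f a) (hφ : ∀ᶠ x in 𝓝 a, negInv (f x) = φ x) : ContinuousAt φ a :=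
  isOpenEmbedding_coe.isInducing.continuousAt_iff.2 <|
    (continuous_negInv.continuousAt.comp hf).congr hφ

lemma neg_one_div_lt_neg_one_div {u v : ℝ} (h : 0 < u * v) (huv : u < v) : -1 / u < -1 / v := by
  have : -1 / v - -1 / u = (v - u) / (u * v) := by
    field_simp [left_ne_zero_of_mul h.ne', right_ne_zero_of_mul h.ne']
    ring
  linarith [div_pos (sub_pos.2 huv) h]

lemma div_one_sub_mul_lt_div_one_sub_mul {p q x y : ℝ} (hpq : p < q) (hxy : x < y)
    (hp : 0 < 1 - x * p) (hq : 0 < 1 - y * q) : p / (1 - x * p) < q / (1 - y * q) := by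
  rw [div_lt_div_iff₀ hp hq]
  rcases lt_or_ge p 0 with hp0 | hp0
  · rcases lt_or_ge 0 q with hq0 | hq0
    · nlinarith [mul_pos hp hq0]
    · nlinarith [mul_nonneg_of_nonpos_of_nonpos hp0.le hq0]
  · nlinarith [mul_nonneg hp0 (hp0.trans hpq.le)]

lemma StrictMonoOn.neg_one_div {φ : ℝ → ℝ} {s : Set ℝ} {c : ℝ} (hφ : StrictMonoOn φ s)
    (hs : ∀ x ∈ s, 0 < φ x * c) : StrictMonoOn (fun x => -1 / φ x) s := by
  intro x hx y hy hxy
  have : 0 < φ x * φ y * (c * c) := by nlinarith [mul_pos (hs x hx) (hs y hy)]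
  exact neg_one_div_lt_neg_one_div (pos_of_mul_pos_left this (mul_self_nonneg c)) (hφ hx hy hxy)

lemma StrictMonoOn.div_one_sub_mul {φ : ℝ → ℝ} {s : Set ℝ} (hφ : StrictMonoOn φ s)
    (hs : ∀ x ∈ s, 0 < 1 - x * φ x) : StrictMonoOn (fun x => φ x / (1 - x * φ x)) s :=
  fun _ hx _ hy hxy => div_one_sub_mul_lt_div_one_sub_mul (hφ hx hy hxy) hxy (hs _ hx) (hs _ hy)

lemma incAt_iff {I : Set ℝ} {f : ℝ → OnePoint ℝ} {a : ℝ} (hI : I ∈ 𝓝 a) :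
    IncAt I f a ↔ ∃ φ : ℝ → ℝ, (∃ s ∈ 𝓝 a, StrictMonoOn φ s) ∧ ∀ᶠ x in 𝓝 a, f x = φ x := by
  constructor
  · rintro ⟨ε, hε, -, hmono⟩
    have hfin : ∀ x ∈ Ioo (a - ε) (a + ε), f x = (f x).elim 0 id := by
      intro x hx
      obtain ⟨r, -, hr, -, -⟩ := hmono x hx ((x + (a + ε)) / 2)
        ⟨by linarith [hx.1], by linarith [hx.2]⟩ (by linarith [hx.2])
      rw [hr]
      rfl
    have hJ : Ioo (a - ε) (a + ε) ∈ 𝓝 a := Ioo_mem_nhds (by linarith) (by linarith)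
    refine ⟨fun x => (f x).elim 0 id, ⟨_, hJ, ?_⟩, eventually_of_mem hJ hfin⟩
    intro x hx y hy hxy
    obtain ⟨rx, ry, hrx, hry, hlt⟩ := hmono x hx y hy hxy
    simpa [hrx, hry] using hlt
  · rintro ⟨φ, ⟨s, hs, hφ⟩, hfφ⟩
    obtain ⟨ε, hε, hball⟩ := Metric.mem_nhds_iff.1 (inter_mem hI (inter_mem hs hfφ))
    rw [Real.ball_eq_Ioo] at hball
    refine ⟨ε, hε, fun x hx => (hball hx).1, fun x hx y hy hxy => ?_⟩
    exact ⟨φ x, φ y, (hball hx).2.2, (hball hy).2.2, hφ (hball hx).2.1 (hball hy).2.1 hxy⟩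

lemma IncAt.addPt {I : Set ℝ} {f : ℝ → OnePoint ℝ} {a : ℝ} (h : IncAt I f a) :
    IncAt I (fun x => addPt (f x) x) a := by
  obtain ⟨ε, hε, hsub, hmono⟩ := h
  refine ⟨ε, hε, hsub, fun x hx y hy hxy => ?_⟩
  obtain ⟨rx, ry, hfx, hfy, hlt⟩ := hmono x hx y hy hxy
  exact ⟨rx + x, ry + y, by simp only [hfx, addPt_coe], by simp only [hfy, addPt_coe], by linarith⟩

theorem stmt15 (I : Set ℝ) (hI : IsOpen I) (f : ℝ → OnePoint ℝ)
    (hf : ContinuousOn f I)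
    (hanti : ∀ a ∈ I, AnticlockwiseAt I f a) :
    ∀ a ∈ I, AnticlockwiseAt I (fun x => addPt (f x) x) a := by
  intro a ha
  have hIa : I ∈ 𝓝 a := hI.mem_nhds ha
  rcases hanti a ha with hinc | hinc
  · exact .inl hinc.addPt
  obtain ⟨φ, ⟨s, hs, hφ⟩, hfφ⟩ := (incAt_iff hIa).1 hinc
  have hφa : ContinuousAt φ a := continuousAt_of_eventually_negInv_eq (hf.continuousAt hIa) hfφ
  have hf_eq : ∀ᶠ x in 𝓝 a, f x = negInv (φ x) :=
    hfφ.mono fun x hx => by rw [← hx, negInv_negInv]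
  by_cases h0 : φ a = 0
  · have hpos : ∀ᶠ x in 𝓝 a, 0 < 1 - x * φ x :=
      (continuousAt_const.sub (continuousAt_id.mul hφa)).eventually (lt_mem_nhds (by simp [h0]))
    refine .inr ((incAt_iff hIa).2 ⟨_, ⟨_, inter_mem hs hpos,
      (hφ.mono inter_subset_left).div_one_sub_mul fun x hx => hx.2⟩, ?_⟩)
    filter_upwards [hf_eq, hpos] with x hx hx'
    rw [hx, negInv_addPt_negInv x hx'.ne']
  · have hsign : ∀ᶠ x in 𝓝 a, 0 < φ x * φ a :=
      (hφa.mul_const _).eventually (lt_mem_nhds (mul_self_pos.2 h0))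
    refine .inl (IncAt.addPt ((incAt_iff hIa).2 ⟨fun x => -1 / φ x, ⟨_, inter_mem hs hsign,
      (hφ.mono inter_subset_left).neg_one_div fun x hx => hx.2⟩, ?_⟩))
    filter_upwards [hf_eq, hsign] with x hx hx'
    rw [hx, negInv_coe_of_ne_zero (left_ne_zero_of_mul hx'.ne')]
end

section
/- For each n ≥ 1, the map c_n : ℝ → ℝ ∪ {∞} defined by c_n(α) = (B_α A^{-1})^n(0) (Möbius action, equal to u_n(α)/l_n(α)) satisfies the recursion c_{n+1}(α) = 1/(α + 1/(c_n(α) - 1)), with c₁(α) = 1/(α-1), and is a clockwise map on S¹ ≅ ℝ ∪ {∞}. -/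
open Matrix OnePoint

noncomputable def oinv (p : OnePoint ℝ) : OnePoint ℝ :=
  Option.elim p (((0 : ℝ) : OnePoint ℝ))
    (fun x => if x = 0 then ∞ else ((1 / x : ℝ) : OnePoint ℝ))

noncomputable def cmap (n : ℕ) (α : ℝ) : OnePoint ℝ :=
  mobius ((matB α * matA⁻¹) ^ n) ((0 : ℝ) : OnePoint ℝ)

/-!
Write `M = B_α A⁻¹ = [[1,-1],[α,1-α]]` and `(u_n, l_n)` for the second column of `Mⁿ`, so that
`c_n = [u_n : l_n]`. The recursion is the Möbius action of `M`, factored as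
`x ↦ 1 / (α + 1 / (x - 1))`. For clockwiseness, since `det M = 1` and `dM/dα = [[0,0],[1,-1]]`,
the Wronskian `W_n = u_n' l_n - u_n l_n'` satisfies `W_{n+1} = W_n - (u_n - l_n)²`, hence
`W_n ≤ -1` for `n ≥ 1`. So `u_n / l_n` decreases away from the poles, and near a pole
`-1 / c_n = -l_n / u_n` decreases as well, having the same Wronskian.
-/

open Filter Topology

/-- The point `[p : q]` of `ℝ ∪ {∞}`, with junk value `∞` at `p = q = 0`. -/
noncomputable def ratioPt (p q : ℝ) : OnePoint ℝ :=
  if q = 0 then ∞ else ((p / q : ℝ) : OnePoint ℝ)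

lemma ratioPt_of_ne_zero {p q : ℝ} (hq : q ≠ 0) : ratioPt p q = ((p / q : ℝ) : OnePoint ℝ) :=
  if_neg hq

lemma ratioPt_neg_neg (p q : ℝ) : ratioPt (-p) (-q) = ratioPt p q := by
  simp only [ratioPt, neg_eq_zero, neg_div_neg_eq]

lemma mobius_coe_zero (g : SL2) :
    mobius g ((0 : ℝ) : OnePoint ℝ) = ratioPt (g.1 0 1) (g.1 1 1) := by
  change (if g.1 1 0 * 0 + g.1 1 1 = 0 then ∞ else _) = _
  simp only [ratioPt, mul_zero, zero_add]

lemma addPt_ratioPt (p q c : ℝ) : addPt (ratioPt p q) c = ratioPt (p + c * q) q := by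
  by_cases hq : q = 0
  · simp only [ratioPt, if_pos hq]
    rfl
  · rw [ratioPt_of_ne_zero hq, ratioPt_of_ne_zero hq]
    change ((p / q + c : ℝ) : OnePoint ℝ) = _
    congr 1
    field_simp

lemma oinv_ratioPt {p q : ℝ} (hpq : p ≠ 0 ∨ q ≠ 0) : oinv (ratioPt p q) = ratioPt q p := by
  by_cases hq : q = 0
  · have hp : p ≠ 0 := hpq.resolve_right (not_not.mpr hq)
    subst hq
    rw [ratioPt, if_pos rfl, ratioPt_of_ne_zero hp, zero_div]
    rfl
  · rw [ratioPt_of_ne_zero hq]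
    change (if p / q = 0 then ∞ else ((1 / (p / q) : ℝ) : OnePoint ℝ)) = _
    by_cases hp : p = 0
    · simp [ratioPt, hp]
    · rw [if_neg (div_ne_zero hp hq), ratioPt_of_ne_zero hp, one_div_div]

lemma negInv_ratioPt {p : ℝ} (q : ℝ) (hp : p ≠ 0) : negInv (ratioPt p q) = ratioPt (-q) p := by
  rw [ratioPt_of_ne_zero hp]
  by_cases hq : q = 0
  · subst hq
    rw [ratioPt, if_pos rfl, neg_zero, zero_div]
    rfl
  · rw [ratioPt_of_ne_zero hq]
    change (if p / q = 0 then ∞ else ((-1 / (p / q) : ℝ) : OnePoint ℝ)) = _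
    rw [if_neg (div_ne_zero hp hq), neg_div, one_div_div, neg_div]

noncomputable def wronskian (p q : ℝ → ℝ) (x : ℝ) : ℝ := deriv p x * q x - p x * deriv q x

lemma decAt_univ_of_eventually_deriv_neg {f : ℝ → OnePoint ℝ} {g : ℝ → ℝ} {a : ℝ}
    (hfg : ∀ᶠ x in 𝓝 a, f x = g x) (hg : ∀ᶠ x in 𝓝 a, DifferentiableAt ℝ g x ∧ deriv g x < 0) :
    DecAt Set.univ f a := by
  obtain ⟨ε, hε, hball⟩ := Metric.eventually_nhds_iff_ball.mp (hfg.and hg)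
  simp only [Real.ball_eq_Ioo] at hball
  have hanti : StrictAntiOn g (Set.Ioo (a - ε) (a + ε)) :=
    strictAntiOn_of_deriv_neg (convex_Ioo _ _)
      (fun x hx => (hball x hx).2.1.continuousAt.continuousWithinAt)
      (fun x hx => (hball x (interior_subset hx)).2.2)
  refine ⟨ε, hε, Set.subset_univ _, fun x hx y hy hxy => ?_⟩
  exact ⟨g x, g y, (hball x hx).1, (hball y hy).1, hanti hx hy hxy⟩

lemma deriv_div_neg_of_wronskian_neg {p q : ℝ → ℝ} {x : ℝ} (hp : DifferentiableAt ℝ p x)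
    (hq : DifferentiableAt ℝ q x) (hqx : q x ≠ 0) (hW : wronskian p q x < 0) :
    deriv (fun y => p y / q y) x < 0 := by
  rw [deriv_fun_div hp hq hqx]
  exact div_neg_of_neg_of_pos hW (pow_two_pos_of_ne_zero hqx)

lemma clockwiseAt_ratioPt {p q : ℝ → ℝ} (hp : Differentiable ℝ p) (hq : Differentiable ℝ q)
    (hW : ∀ x, wronskian p q x < 0) (hpq : ∀ x, p x ≠ 0 ∨ q x ≠ 0) (a : ℝ) :
    ClockwiseAt Set.univ (fun x => ratioPt (p x) (q x)) a := by
  by_cases hqa : q a = 0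
  · right
    have hp_ne : ∀ᶠ x in 𝓝 a, p x ≠ 0 :=
      (hp a).continuousAt.eventually_ne ((hpq a).resolve_right (not_not.mpr hqa))
    have hW' : ∀ x, wronskian (fun y => -q y) p x < 0 := fun x => by
      simpa [wronskian, deriv.fun_neg, mul_comm] using hW x
    refine decAt_univ_of_eventually_deriv_neg (g := fun x => -q x / p x) ?_ ?_
    · filter_upwards [hp_ne] with x hx
      rw [negInv_ratioPt _ hx, ratioPt_of_ne_zero hx]
    · filter_upwards [hp_ne] with x hx
      exact ⟨((hq x).neg.div (hp x) hx),
        deriv_div_neg_of_wronskian_neg (hq x).neg (hp x) hx (hW' x)⟩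
  · left
    have hq_ne : ∀ᶠ x in 𝓝 a, q x ≠ 0 := (hq a).continuousAt.eventually_ne hqa
    refine decAt_univ_of_eventually_deriv_neg (g := fun x => p x / q x) ?_ ?_
    · filter_upwards [hq_ne] with x hx
      exact ratioPt_of_ne_zero hx
    · filter_upwards [hq_ne] with x hx
      exact ⟨(hp x).div (hq x) hx, deriv_div_neg_of_wronskian_neg (hp x) (hq x) hx (hW x)⟩

noncomputable def matM (α : ℝ) : SL2 := ⟨!![1, -1; α, 1 - α], by norm_num [Matrix.det_fin_two_of]⟩

lemma matB_mul_matA_inv (α : ℝ) : matB α * matA⁻¹ = matM α := by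
  rw [eq_comm, eq_mul_inv_iff_mul_eq]
  ext i j
  change ((matM α).1 * matA.1) i j = (matB α).1 i j
  simp only [matM, matA, matB, Matrix.mul_fin_two]
  fin_cases i <;> fin_cases j <;> simp

noncomputable def u (n : ℕ) (α : ℝ) : ℝ := (matM α ^ n).1 0 1

noncomputable def l (n : ℕ) (α : ℝ) : ℝ := (matM α ^ n).1 1 1

lemma u_zero (α : ℝ) : u 0 α = 0 := by simp [u]

lemma l_zero (α : ℝ) : l 0 α = 1 := by simp [l]

lemma u_succ (n : ℕ) (α : ℝ) : u (n + 1) α = u n α - l n α := by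
  rw [u, pow_succ', Matrix.SpecialLinearGroup.coe_mul, Matrix.mul_apply, Fin.sum_univ_two]
  simp [matM, u, l, sub_eq_add_neg]

lemma l_succ (n : ℕ) (α : ℝ) : l (n + 1) α = α * u n α + (1 - α) * l n α := by
  rw [l, pow_succ', Matrix.SpecialLinearGroup.coe_mul, Matrix.mul_apply, Fin.sum_univ_two]
  simp [matM, u, l]

lemma u_ne_zero_or_l_ne_zero (n : ℕ) (α : ℝ) : u n α ≠ 0 ∨ l n α ≠ 0 := by
  have hdet : (matM α ^ n).1.det = 1 := (matM α ^ n).2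
  rw [Matrix.det_fin_two] at hdet
  change _ * l n α - u n α * _ = 1 at hdet
  by_contra! h
  simp [h.1, h.2] at hdet

lemma cmap_eq_ratioPt (n : ℕ) (α : ℝ) : cmap n α = ratioPt (u n α) (l n α) := by
  rw [cmap, matB_mul_matA_inv, mobius_coe_zero]
  rfl

lemma cmap_succ (n : ℕ) (α : ℝ) :
    cmap (n + 1) α = oinv (addPt (oinv (addPt (cmap n α) (-1))) α) := by
  have hul := u_ne_zero_or_l_ne_zero n α
  have h₁ : u n α - l n α ≠ 0 ∨ l n α ≠ 0 := by
    by_contra! h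
    rcases hul with h' | h' <;> apply h' <;> linarith [h.1, h.2]
  have h₂ : l n α + α * (u n α - l n α) ≠ 0 ∨ u n α - l n α ≠ 0 := by
    by_contra! h
    obtain ⟨hl, hdiff⟩ := h
    rw [hdiff, mul_zero, add_zero] at hl
    rcases hul with h' | h' <;> apply h' <;> linarith
  rw [cmap_eq_ratioPt, cmap_eq_ratioPt, addPt_ratioPt, neg_one_mul, ← sub_eq_add_neg,
    oinv_ratioPt h₁, addPt_ratioPt, oinv_ratioPt h₂, u_succ, l_succ]
  congr 1
  ring

lemma cmap_one (α : ℝ) : cmap 1 α = oinv (((α - 1 : ℝ) : OnePoint ℝ)) := by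
  have h : ((α - 1 : ℝ) : OnePoint ℝ) = ratioPt (α - 1) 1 := by
    rw [ratioPt_of_ne_zero one_ne_zero, div_one]
  rw [h, oinv_ratioPt (Or.inr one_ne_zero), cmap_eq_ratioPt, ← ratioPt_neg_neg, u_succ, l_succ,
    u_zero, l_zero]
  congr 1 <;> ring

lemma u_succ_fun (n : ℕ) : u (n + 1) = fun α => u n α - l n α := funext (u_succ n)

lemma l_succ_fun (n : ℕ) : l (n + 1) = fun α => α * u n α + (1 - α) * l n α := funext (l_succ n)

lemma differentiable_u_l (n : ℕ) : Differentiable ℝ (u n) ∧ Differentiable ℝ (l n) := by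
  induction n with
  | zero => exact ⟨by simp [funext u_zero], by simp [funext l_zero]⟩
  | succ n ih =>
    obtain ⟨hu, hl⟩ := ih
    rw [u_succ_fun, l_succ_fun]
    exact ⟨by fun_prop, by fun_prop⟩

lemma wronskian_succ (n : ℕ) (α : ℝ) :
    wronskian (u (n + 1)) (l (n + 1)) α = wronskian (u n) (l n) α - (u n α - l n α) ^ 2 := by
  obtain ⟨hu, hl⟩ := differentiable_u_l n
  have hdu : deriv (u (n + 1)) α = deriv (u n) α - deriv (l n) α := by
    rw [u_succ_fun, deriv_fun_sub (hu α) (hl α)]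
  have hdl : deriv (l (n + 1)) α =
      u n α + α * deriv (u n) α - l n α + (1 - α) * deriv (l n) α := by
    have h := ((hasDerivAt_id' α).fun_mul (hu α).hasDerivAt).fun_add
      (((hasDerivAt_const α 1).fun_sub (hasDerivAt_id' α)).fun_mul (hl α).hasDerivAt)
    rw [l_succ_fun, h.deriv]
    ring
  rw [wronskian, wronskian, hdu, hdl, u_succ, l_succ]
  ring

lemma wronskian_u_l_le (n : ℕ) (hn : 1 ≤ n) (α : ℝ) : wronskian (u n) (l n) α ≤ -1 := by
  induction n, hn using Nat.le_induction with
  | base =>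
    have hu₀ : u 0 = fun _ => 0 := funext u_zero
    have hl₀ : l 0 = fun _ => 1 := funext l_zero
    refine (wronskian_succ 0 α).trans_le ?_
    simp [wronskian, hu₀, hl₀]
  | succ n _ ih =>
    rw [wronskian_succ]
    linarith [sq_nonneg (u n α - l n α)]

theorem stmt16 (n : ℕ) (hn : 1 ≤ n) :
    (∀ α : ℝ, cmap 1 α = oinv (((α - 1 : ℝ) : OnePoint ℝ))) ∧
    (∀ α : ℝ, cmap (n + 1) α = oinv (addPt (oinv (addPt (cmap n α) (-1))) α)) ∧
    (∀ a : ℝ, ClockwiseAt Set.univ (cmap n) a) := by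
  refine ⟨cmap_one, cmap_succ n, fun a => ?_⟩
  obtain ⟨hu, hl⟩ := differentiable_u_l n
  rw [show cmap n = fun α => ratioPt (u n α) (l n α) from funext (cmap_eq_ratioPt n)]
  exact clockwiseAt_ratioPt hu hl (fun α => (wronskian_u_l_le n hn α).trans_lt (by norm_num))
    (u_ne_zero_or_l_ne_zero n) a
end

section
/- Let α_n denote the maximal real root of p_n(α) = (-1)^{n+1}(2u_n(α) - l_n(α)). Then α₁ = 3, α₂ = (5+√5)/2, the sequence (α_n) is strictly increasing, each α_n lies in the interval (3,4) for n ≥ 2 (and α_n < 4 for all n), and α_n → 4 as n → ∞. -/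
/-!
Since `p₀ = 1`, `p₁ = X - 3` and `p_{n+2} = (X - 2) p_{n+1} - p_n`, substituting `x = 2 + 2 cos θ`
gives `p_n(2 + 2 cos θ) · cos (θ/2) = cos ((2n+1) θ/2)` (Chebyshev-type recurrence, from the
sum-to-product formula). Hence `2 + 2 cos (π/(2n+1))` is a root, while on the right of it `p_n` is
positive: below `4` by the same identity, and from `4` on because `p_n(x) ≥ 1` there. So
`α_n = 2 + 2 cos (π/(2n+1))` for `n ≥ 1`, from which all the claims follow.
-/

open Polynomial

noncomputable def maxroot (n : ℕ) : ℝ :=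
  sSup {x : ℝ | Polynomial.aeval x (ppoly n) = 0}

open Real

lemma ppoly_zero : ppoly 0 = 1 := by
  simp [ppoly, upoly, lpoly, ul]

lemma ppoly_one : ppoly 1 = X - 3 := by
  simp [ppoly, upoly, lpoly, ul]
  ring

lemma ppoly_add_two (n : ℕ) : ppoly (n + 2) = (X - 2) * ppoly (n + 1) - ppoly n := by
  simp only [ppoly, upoly, lpoly, ul, pow_succ]
  ring

lemma aeval_ppoly_add_two (n : ℕ) (x : ℝ) :
    aeval x (ppoly (n + 2)) = (x - 2) * aeval x (ppoly (n + 1)) - aeval x (ppoly n) := by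
  simp [ppoly_add_two, map_ofNat]

lemma aeval_ppoly_two_add_two_cos (θ : ℝ) (n : ℕ) :
    aeval (2 + 2 * cos θ) (ppoly n) * cos (θ / 2) = cos ((2 * n + 1) * θ / 2) := by
  induction n using Nat.twoStepInduction with
  | zero => simp [ppoly_zero]
  | one =>
    have h := cos_add_cos (3 * θ / 2) (θ / 2)
    rw [show (3 * θ / 2 + θ / 2) / 2 = θ by ring, show (3 * θ / 2 - θ / 2) / 2 = θ / 2 by ring] at h
    rw [show (2 * ((1 : ℕ) : ℝ) + 1) * θ / 2 = 3 * θ / 2 by push_cast; ring]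
    simp only [ppoly_one, map_sub, aeval_X, map_ofNat]
    linear_combination -h
  | more n ih₀ ih₁ =>
    have h := cos_add_cos ((2 * (n + 2 : ℕ) + 1) * θ / 2) ((2 * n + 1) * θ / 2)
    rw [show ((2 * (n + 2 : ℕ) + 1) * θ / 2 + (2 * n + 1) * θ / 2) / 2
          = (2 * (n + 1 : ℕ) + 1) * θ / 2 by push_cast; ring,
        show ((2 * (n + 2 : ℕ) + 1) * θ / 2 - (2 * n + 1) * θ / 2) / 2 = θ by push_cast; ring] at h
    rw [aeval_ppoly_add_two]
    linear_combination (2 * cos θ) * ih₁ - ih₀ - h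

lemma one_le_aeval_ppoly_of_four_le {x : ℝ} (hx : 4 ≤ x) (n : ℕ) :
    1 ≤ aeval x (ppoly n) ∧ aeval x (ppoly n) ≤ aeval x (ppoly (n + 1)) := by
  induction n with
  | zero =>
    simp only [zero_add, ppoly_zero, ppoly_one, map_one, map_sub, aeval_X, map_ofNat]
    constructor <;> linarith
  | succ n ih =>
    have h := aeval_ppoly_add_two n x
    constructor <;> nlinarith

lemma aeval_ppoly_two_add_two_cos_pi_div {n : ℕ} (hn : 1 ≤ n) :
    aeval (2 + 2 * cos (π / (2 * n + 1))) (ppoly n) = 0 := by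
  have h := aeval_ppoly_two_add_two_cos (π / (2 * n + 1)) n
  rw [show (2 * n + 1) * (π / (2 * n + 1)) / 2 = π / 2 by field_simp, cos_pi_div_two] at h
  have hcos : 0 < cos (π / (2 * n + 1) / 2) := by
    apply cos_pos_of_mem_Ioo
    have hn' : (1 : ℝ) < 2 * n + 1 := by
      have : (1 : ℝ) ≤ n := by exact_mod_cast hn
      linarith
    constructor
    · linarith [pi_pos, show 0 < π / (2 * n + 1) / 2 by positivity]
    · linarith [div_lt_self pi_pos hn']
  exact (mul_eq_zero.mp h).resolve_right hcos.ne'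

lemma aeval_ppoly_two_add_two_cos_pos {θ : ℝ} {n : ℕ} (hθ₀ : 0 ≤ θ) (hθ : θ < π / (2 * n + 1)) :
    0 < aeval (2 + 2 * cos θ) (ppoly n) := by
  have hd : (1 : ℝ) ≤ 2 * n + 1 := by linarith [n.cast_nonneg (α := ℝ)]
  have hθπ : θ < π := hθ.trans_le (div_le_self pi_pos.le hd)
  have hmul : (2 * n + 1) * θ < π := by rwa [lt_div_iff₀ (by linarith), mul_comm] at hθ
  have hhalf : 0 < cos (θ / 2) := cos_pos_of_mem_Ioo ⟨by linarith [pi_pos], by linarith⟩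
  have hfull : 0 < cos ((2 * n + 1) * θ / 2) :=
    cos_pos_of_mem_Ioo ⟨by linarith [pi_pos, mul_nonneg (by linarith : (0 : ℝ) ≤ 2 * n + 1) hθ₀],
      by linarith⟩
  rw [← aeval_ppoly_two_add_two_cos] at hfull
  exact pos_of_mul_pos_left hfull hhalf.le

lemma aeval_ppoly_pos_of_lt {x : ℝ} {n : ℕ} (hx : 2 + 2 * cos (π / (2 * n + 1)) < x) :
    0 < aeval x (ppoly n) := by
  rcases le_or_gt 4 x with h4 | h4
  · exact one_pos.trans_le (one_le_aeval_ppoly_of_four_le h4 n).1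
  have hπ : 0 ≤ π / (2 * n + 1) := by positivity
  have hπ' : π / (2 * n + 1) ≤ π := div_le_self pi_pos.le (by linarith [n.cast_nonneg (α := ℝ)])
  have hc : -1 ≤ cos (π / (2 * n + 1)) := neg_one_le_cos _
  have hθ : arccos ((x - 2) / 2) < π / (2 * n + 1) := by
    conv_rhs => rw [← arccos_cos hπ hπ']
    exact arccos_lt_arccos hc (by linarith) (by linarith)
  have hx' : x = 2 + 2 * cos (arccos ((x - 2) / 2)) := by
    rw [cos_arccos (by linarith) (by linarith)]
    ring
  rw [hx']
  exact aeval_ppoly_two_add_two_cos_pos (arccos_nonneg _) hθ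

lemma maxroot_eq {n : ℕ} (hn : 1 ≤ n) : maxroot n = 2 + 2 * cos (π / (2 * n + 1)) := by
  refine IsGreatest.csSup_eq ⟨aeval_ppoly_two_add_two_cos_pi_div hn, fun x hx => ?_⟩
  by_contra! hlt
  exact (aeval_ppoly_pos_of_lt hlt).ne' hx

lemma maxroot_lt_maxroot {m n : ℕ} (hm : 1 ≤ m) (hmn : m < n) : maxroot m < maxroot n := by
  rw [maxroot_eq hm, maxroot_eq (hm.trans hmn.le)]
  have hm' : (1 : ℝ) ≤ m := by exact_mod_cast hm
  have hmn' : (m : ℝ) < n := by exact_mod_cast hmn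
  have := cos_lt_cos_of_nonneg_of_le_pi (by positivity) (div_le_self pi_pos.le (by linarith))
    (div_lt_div_of_pos_left pi_pos (by positivity) (by linarith) : π / (2 * n + 1) < π / (2 * m + 1))
  linarith

lemma maxroot_lt_four {n : ℕ} (hn : 1 ≤ n) : maxroot n < 4 := by
  rw [maxroot_eq hn]
  have hn' : (1 : ℝ) ≤ 2 * n + 1 := by linarith [n.cast_nonneg (α := ℝ)]
  have := cos_lt_cos_of_nonneg_of_le_pi le_rfl (div_le_self pi_pos.le hn')
    (by positivity : 0 < π / (2 * n + 1))
  rw [cos_zero] at this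
  linarith

lemma tendsto_maxroot : Filter.Tendsto (fun n => maxroot (n + 1)) Filter.atTop (nhds 4) := by
  have hθ : Filter.Tendsto (fun n : ℕ => π / (2 * (n + 1 : ℕ) + 1)) Filter.atTop (nhds 0) := by
    refine tendsto_const_nhds.div_atTop (Filter.tendsto_atTop_mono (fun n => ?_)
      tendsto_natCast_atTop_atTop)
    push_cast
    linarith
  have hcos := (((continuous_cos.tendsto 0).comp hθ).const_mul 2).const_add 2
  rw [cos_zero, show (2 : ℝ) + 2 * 1 = 4 by norm_num] at hcos
  exact hcos.congr fun n => (maxroot_eq (Nat.le_add_left 1 n)).symm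

lemma maxroot_one : maxroot 1 = 3 := by
  rw [maxroot_eq le_rfl]
  norm_num [cos_pi_div_three]

lemma maxroot_two : maxroot 2 = (5 + √5) / 2 := by
  rw [maxroot_eq one_le_two]
  norm_num [cos_pi_div_five]
  ring

theorem stmt19 :
    maxroot 1 = 3 ∧
    maxroot 2 = (5 + Real.sqrt 5) / 2 ∧
    (∀ n : ℕ, 1 ≤ n → maxroot n < maxroot (n + 1)) ∧
    (∀ n : ℕ, 1 ≤ n → maxroot n < 4) ∧
    (∀ n : ℕ, 2 ≤ n → maxroot n ∈ Set.Ioo (3 : ℝ) 4) ∧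
    Filter.Tendsto (fun n => maxroot (n + 1)) Filter.atTop (nhds 4) := by
  refine ⟨maxroot_one, maxroot_two, fun n hn => maxroot_lt_maxroot hn n.lt_succ_self, fun n hn => maxroot_lt_four hn,
    fun n hn => ⟨maxroot_one ▸ maxroot_lt_maxroot le_rfl hn, maxroot_lt_four (one_le_two.trans hn)⟩,
    tendsto_maxroot⟩
end
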